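/- In LR-Subtraction Nim with removable set S = {2,3}, the outcome of n tokens is: L if n ≡ 0 or 2 (mod 5), R if n = 1, N if n ≡ 3 or 4 (mod 5), and P if n ≡ 1 (mod 5) with n ≥ 6. -/
import Mathlib


open scoped Classical

inductive Outcome : Type
  | L | R | N | P
deriving DecidableEq

/-- Outcome determined from the set of outcomes of the options of a non-terminal position. -/
noncomputable def fromOptions (T : Set Outcome) : Outcome :=
  if Outcome.L ∈ T ∧ T ⊆ {Outcome.L, Outcome.N} then Outcome.L
  else if Outcome.R ∈ T ∧ T ⊆ {Outcome.R, Outcome.N} then Outcome.R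
  else if T = {Outcome.N} then Outcome.P
  else Outcome.N

/-- Outcome of Ending Partizan Subtraction Nim with removable set `S ⊆ ℤ≥2` and
terminal assignment `W`. -/
noncomputable def epOutcome (S : Set ℕ) (hS : ∀ s ∈ S, 2 ≤ s) (W : ℕ → Outcome) : ℕ → Outcome :=
  fun n => Nat.strongRecOn n (fun n ih =>
    if ∃ s ∈ S, s ≤ n then
      fromOptions {o | ∃ s, ∃ hs : s ∈ S, ∃ hsn : s ≤ n,
        o = ih (n - s) (by have := hS s hs; omega)}
    else W n)

/-- Outcome of `LR`-Subtraction Nim: at a terminal position, Left wins if the number of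
remaining tokens is even, Right wins if it is odd. -/
noncomputable def lrOutcome (S : Set ℕ) (hS : ∀ s ∈ S, 2 ≤ s) : ℕ → Outcome :=
  epOutcome S hS (fun n => if Even n then Outcome.L else Outcome.R)

lemma lr_unfold (S : Set ℕ) (hS : ∀ s ∈ S, 2 ≤ s) (n : ℕ) :
    lrOutcome S hS n =
      if ∃ s ∈ S, s ≤ n then
        fromOptions {o | ∃ s, ∃ _ : s ∈ S, ∃ _ : s ≤ n, o = lrOutcome S hS (n - s)}
      else (if Even n then Outcome.L else Outcome.R) := by
  conv_lhs => rw [lrOutcome, epOutcome]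
  rw [Nat.strongRecOn_eq]
  rfl

def tbl : Outcome → Outcome → Outcome
  | .L, .L => .L
  | .L, .N => .L
  | .N, .L => .L
  | .N, .N => .P
  | .R, .R => .R
  | .R, .N => .R
  | .N, .R => .R
  | _, _ => .N

lemma fromOptions_pair (a b : Outcome) : fromOptions {a, b} = tbl a b := by
  cases a <;> cases b <;>
    simp [fromOptions, tbl, Set.subset_def, Set.ext_iff] <;>
    exact ⟨Outcome.N, by simp⟩

noncomputable def gpat (n : ℕ) : Outcome :=
  if n = 1 then .R
  else if n % 5 = 0 ∨ n % 5 = 2 then .L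
  else if n % 5 = 1 then .P
  else .N

lemma fromOptions_single (a : Outcome) : fromOptions {a} = tbl a a := by
  rw [← Set.pair_eq_singleton, fromOptions_pair]

lemma gpat_L (m : ℕ) (h1 : m ≠ 1) (h : m % 5 = 0 ∨ m % 5 = 2) : gpat m = .L := by
  rw [gpat, if_neg h1, if_pos h]

lemma gpat_P (m : ℕ) (h1 : m ≠ 1) (h : m % 5 = 1) : gpat m = .P := by
  rw [gpat, if_neg h1, if_neg (by omega), if_pos h]

lemma gpat_N (m : ℕ) (h1 : m ≠ 1) (h : m % 5 = 3 ∨ m % 5 = 4) : gpat m = .N := by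
  rw [gpat, if_neg h1, if_neg (by omega), if_neg (by omega)]

lemma key (S : Set ℕ) (hSdef : S = {2, 3}) (hS : ∀ s ∈ S, 2 ≤ s) (n : ℕ) :
    lrOutcome S hS n = gpat n := by
  induction n using Nat.strong_induction_on with
  | _ n ih =>
  rcases lt_or_ge n 2 with h | h
  · rw [lr_unfold, if_neg (by rintro ⟨s, hs, hsn⟩; rw [hSdef] at hs; simp at hs; omega)]
    interval_cases n <;> simp [gpat]
  rcases eq_or_lt_of_le h with h2 | h3
  · -- n = 2
    subst h2
    rw [lr_unfold, if_pos ⟨2, by simp [hSdef], by omega⟩]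
    have hset : {o | ∃ s, ∃ _ : s ∈ S, ∃ _ : s ≤ 2, o = lrOutcome S hS (2 - s)}
        = {lrOutcome S hS 0} := by
      ext o
      simp only [Set.mem_setOf_eq, Set.mem_singleton_iff, hSdef, Set.mem_insert_iff,
        Set.mem_singleton_iff]
      constructor
      · rintro ⟨s, hs, hsn, rfl⟩
        rcases hs with rfl | rfl
        · rfl
        · omega
      · rintro rfl; exact ⟨2, Or.inl rfl, by omega, rfl⟩
    rw [hset, ih 0 (by omega), fromOptions_single]
    simp [gpat, tbl]
  · -- n ≥ 3
    have h3' : 3 ≤ n := h3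
    rw [lr_unfold, if_pos ⟨2, by simp [hSdef], by omega⟩]
    have hset : {o | ∃ s, ∃ _ : s ∈ S, ∃ _ : s ≤ n, o = lrOutcome S hS (n - s)}
        = {lrOutcome S hS (n - 2), lrOutcome S hS (n - 3)} := by
      ext o
      simp only [Set.mem_setOf_eq, hSdef, Set.mem_insert_iff, Set.mem_singleton_iff]
      constructor
      · rintro ⟨s, hs, hsn, rfl⟩
        rcases hs with rfl | rfl
        · exact Or.inl rfl
        · exact Or.inr rfl
      · rintro (rfl | rfl)
        · exact ⟨2, Or.inl rfl, by omega, rfl⟩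
        · exact ⟨3, Or.inr rfl, by omega, rfl⟩
    rw [hset, ih (n - 2) (by omega), ih (n - 3) (by omega), fromOptions_pair]
    obtain ⟨k, r, hr, rfl⟩ : ∃ k r, r < 5 ∧ n = 5 * k + r := ⟨n / 5, n % 5, by omega, by omega⟩
    interval_cases r
    · rw [gpat_N (5*k+0-2) (by omega) (by omega), gpat_L (5*k+0-3) (by omega) (by omega),
        gpat_L (5*k+0) (by omega) (by omega)]; rfl
    · rw [gpat_N (5*k+1-2) (by omega) (by omega), gpat_N (5*k+1-3) (by omega) (by omega),
        gpat_P (5*k+1) (by omega) (by omega)]; rfl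
    · rw [gpat_L (5*k+2-2) (by omega) (by omega), gpat_N (5*k+2-3) (by omega) (by omega),
        gpat_L (5*k+2) (by omega) (by omega)]; rfl
    · rcases Nat.eq_zero_or_pos k with rfl | hk
      · norm_num
        rw [show gpat 1 = Outcome.R from rfl, gpat_L 0 (by omega) (by omega),
          gpat_N 3 (by omega) (by omega)]; rfl
      · rw [show 5*k+3-2 = 5*(k-1)+6 by omega, gpat_P (5*(k-1)+6) (by omega) (by omega),
          gpat_L (5*k+3-3) (by omega) (by omega), gpat_N (5*k+3) (by omega) (by omega)]; rfl
    · rcases Nat.eq_zero_or_pos k with rfl | hk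
      · norm_num
        rw [gpat_L 2 (by omega) (by omega), show gpat 1 = Outcome.R from rfl,
          gpat_N 4 (by omega) (by omega)]; rfl
      · rw [gpat_L (5*k+4-2) (by omega) (by omega),
          show 5*k+4-3 = 5*(k-1)+6 by omega, gpat_P (5*(k-1)+6) (by omega) (by omega),
          gpat_N (5*k+4) (by omega) (by omega)]; rfl

theorem stmt0 (S : Set ℕ) (hSdef : S = {2, 3}) (hS : ∀ s ∈ S, 2 ≤ s) (n : ℕ) :
    ((n % 5 = 0 ∨ n % 5 = 2) → lrOutcome S hS n = Outcome.L) ∧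
    (n = 1 → lrOutcome S hS n = Outcome.R) ∧
    ((n % 5 = 3 ∨ n % 5 = 4) → lrOutcome S hS n = Outcome.N) ∧
    (n % 5 = 1 ∧ 6 ≤ n → lrOutcome S hS n = Outcome.P) := by
  rw [key S hSdef hS n]
  refine ⟨fun h => ?_, fun h => ?_, fun h => ?_, fun h => ?_⟩
  · simp [gpat, h, show n ≠ 1 by omega]
  · subst h; simp [gpat]
  · simp [gpat, show n ≠ 1 by omega, show ¬(n % 5 = 0 ∨ n % 5 = 2) by omega,
      show ¬(n % 5 = 1) by omega]
  · simp [gpat, show n ≠ 1 by omega, show ¬(n % 5 = 0 ∨ n % 5 = 2) by omega, h.1]
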